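/- arXiv:2201.13253 — 3 statements merged into one kernel-verified Lean document; each statement's English description precedes it below -/
import Mathlib

section
/- For every integer m ≥ 1 and all integers 0 ≤ k < n, B_m(n,k) = Σ_{j=0}^{⌊k/m⌋} C(n−mj−1, n−k−1), where C(a,b) denotes the binomial coefficient. -/
/-- The `m`-th Pascal-like triangle of the first family: `B m n 0 = 1`,
`B m n n = 1` if `m ∣ n` and `0` otherwise, and Pascal's recurrence
`B m n k = B m (n-1) k + B m (n-1) (k-1)` for `0 < k < n`.
(Values with `k > n` are set to `0`.) -/
def B (m : ℕ) : ℕ → ℕ → ℕ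
  | _, 0 => 1
  | 0, _ + 1 => 0
  | n + 1, k + 1 =>
      if n + 1 = k + 1 then (if m ∣ (n + 1) then 1 else 0)
      else if n + 1 < k + 1 then 0
      else B m n (k + 1) + B m n k

/-!
Induction on `n`. Away from the edges both sides obey Pascal's rule: the right-hand side
termwise, since its summation range grows from `k / m` to `(k + 1) / m` only by a vanishing
term. On the subdiagonal, `B m (n + 1) n = n / m + 1` because each step down the diagonal adds
`B m n n`, the indicator of `m ∣ n`.
-/

open Finset

section

variable (m : ℕ)

lemma B_zero_right (n : ℕ) : B m n 0 = 1 := by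
  cases n <;> rfl

lemma B_self (n : ℕ) : B m n n = if m ∣ n then 1 else 0 := by
  cases n <;> simp [B]

lemma B_succ_succ {n k : ℕ} (hk : k < n) : B m (n + 1) (k + 1) = B m n (k + 1) + B m n k := by
  rw [B, if_neg (by omega), if_neg (by omega)]

lemma B_succ_self (n : ℕ) : B m (n + 1) n = n / m + 1 := by
  induction n with
  | zero => rw [B_zero_right, Nat.zero_div]
  | succ n ih =>
    rw [B_succ_succ m n.lt_succ_self, B_self, ih, Nat.succ_div]
    split_ifs <;> omega

end

/-- `(k + 1) / m` exceeds `k / m` only when `m ∣ k + 1`, and then the extra term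
`j = (k + 1) / m` has upper index `n - k - 2 < n - k - 1`. -/
lemma sum_range_succ_div_choose (m n k : ℕ) (hk : k + 1 < n) :
    ∑ j ∈ range ((k + 1) / m + 1), (n - m * j - 1).choose (n - k - 1) =
      ∑ j ∈ range (k / m + 1), (n - m * j - 1).choose (n - k - 1) := by
  rw [Nat.succ_div]
  split_ifs with hdvd
  · have hmul : m * (k / m + 1) = k + 1 := by
      rw [← Nat.succ_div_of_dvd hdvd, Nat.mul_div_cancel' hdvd]
    rw [sum_range_succ, Nat.choose_eq_zero_of_lt, add_zero]
    omega
  · rfl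

lemma sum_choose_pascal (m n k : ℕ) (hk : k + 1 < n) :
    ∑ j ∈ range ((k + 1) / m + 1), (n + 1 - m * j - 1).choose (n + 1 - (k + 1) - 1) =
      ∑ j ∈ range ((k + 1) / m + 1), (n - m * j - 1).choose (n - (k + 1) - 1) +
        ∑ j ∈ range ((k + 1) / m + 1), (n - m * j - 1).choose (n - k - 1) := by
  rw [← sum_add_distrib]
  refine sum_congr rfl fun j hj => ?_
  have hmj : m * j ≤ k + 1 :=
    (Nat.mul_le_mul_left m (Nat.lt_succ_iff.mp (mem_range.mp hj))).trans (Nat.mul_div_le _ _)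
  rw [show n + 1 - m * j - 1 = (n - m * j - 1) + 1 by omega,
    show n + 1 - (k + 1) - 1 = (n - (k + 1) - 1) + 1 by omega, Nat.choose_succ_succ',
    show n - (k + 1) - 1 + 1 = n - k - 1 by omega]

theorem stmt_1_general (m : ℕ) (n k : ℕ) (hk : k < n) :
    B m n k = ∑ j ∈ Finset.range (k / m + 1),
      Nat.choose (n - m * j - 1) (n - k - 1) := by
  induction n generalizing k with
  | zero => omega
  | succ n ih =>
    rcases k with _ | k
    · simp [B_zero_right]
    rcases (Nat.lt_succ_iff.mp hk).eq_or_lt with rfl | hlt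
    · simp [B_succ_self]
    · rw [B_succ_succ m (by omega), ih (k + 1) hlt, ih k (by omega), sum_choose_pascal m n k hlt,
        sum_range_succ_div_choose m n k hlt]

theorem stmt_1 (m : ℕ) (hm : 1 ≤ m) (n k : ℕ) (hk : k < n) :
    B m n k = ∑ j ∈ Finset.range (k / m + 1),
      Nat.choose (n - m * j - 1) (n - k - 1) :=
  stmt_1_general m n k hk
end

section
/- For every integer m ≥ 1 and every integer k ≥ 0, the generating function of the k-th subdiagonal of the m-th triangle of the first family is 1/((1−x^m)(1−x)^k); that is, in the ring of formal power series over ℤ, (1−X^m)·(1−X)^k · Σ_{n≥0} B_m(n+k, n) X^n = 1. -/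
open PowerSeries

/-- The main diagonal is the indicator of multiples of `m`. -/
lemma B_diag (m n : ℕ) : B m n n = if m ∣ n then 1 else 0 := by
  cases n with
  | zero => simp [B]
  | succ j => simp [B]

/-- Pascal recurrence specialized to subdiagonals. -/
lemma B_rec (m k j : ℕ) :
    B m (j + 1 + (k + 1)) (j + 1) = B m (j + (k + 1)) (j + 1) + B m (j + (k + 1)) j := by
  have h1 : j + 1 + (k + 1) = (j + k + 1) + 1 := by ring
  have h2 : j + (k + 1) = j + k + 1 := by ring
  rw [h1, h2]
  show B m (j + k + 1 + 1) (j + 1) = _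
  rw [B]
  have : ¬ (j + k + 1 + 1 = j + 1) := by omega
  rw [if_neg this, if_neg (by omega)]

/-- Multiplying the `(k+1)`-st subdiagonal series by `1 - X` gives the `k`-th. -/
lemma step (m k : ℕ) :
    (1 - X) * PowerSeries.mk (fun n => (B m (n + (k + 1)) n : ℤ)) =
      PowerSeries.mk (fun n => (B m (n + k) n : ℤ)) := by
  ext n
  rw [sub_mul, one_mul, map_sub]
  cases n with
  | zero => simp [B]
  | succ j =>
      rw [coeff_succ_X_mul, coeff_mk, coeff_mk, coeff_mk]
      rw [B_rec m k j]
      push_cast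
      ring

/-- Base case: the geometric series in `X^m` is inverse to `1 - X^m`. -/
lemma base (m : ℕ) (hm : 1 ≤ m) :
    (1 - X ^ m) * PowerSeries.mk (fun n => (if m ∣ n then 1 else 0 : ℤ)) = 1 := by
  ext n
  rw [sub_mul, one_mul, map_sub, coeff_mk, coeff_X_pow_mul']
  cases n with
  | zero => simp; omega
  | succ j =>
      rw [PowerSeries.coeff_one, if_neg (Nat.succ_ne_zero j)]
      by_cases hle : m ≤ j + 1
      · rw [if_pos hle, coeff_mk]
        by_cases hd : m ∣ j + 1
        · rw [if_pos hd, if_pos (Nat.dvd_sub hd dvd_rfl)]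
          ring
        · rw [if_neg hd, if_neg (fun h => hd (by
            have := Nat.dvd_add h dvd_rfl
            rwa [Nat.sub_add_cancel hle] at this))]
          ring
      · rw [if_neg hle]
        have hd : ¬ m ∣ j + 1 := fun h => hle (Nat.le_of_dvd (Nat.succ_pos j) h)
        rw [if_neg hd]; ring

/-- The generating function of the `k`-th subdiagonal of the `m`-th triangle of
the first family is `1/((1 - x^m)(1 - x)^k)`. -/
theorem stmt_2 (m : ℕ) (hm : 1 ≤ m) (k : ℕ) :
    (1 - PowerSeries.X ^ m) * (1 - PowerSeries.X) ^ k *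
      PowerSeries.mk (fun n => (B m (n + k) n : ℤ)) = 1 := by
  induction k with
  | zero =>
      simpa [B_diag] using base m hm
  | succ k ih =>
      calc (1 - X ^ m) * (1 - X) ^ (k + 1) *
          PowerSeries.mk (fun n => (B m (n + (k + 1)) n : ℤ))
          = (1 - X ^ m) * (1 - X) ^ k *
            ((1 - X) * PowerSeries.mk (fun n => (B m (n + (k + 1)) n : ℤ))) := by ring
        _ = 1 := by rw [step m k]; exact ih
end

section
/- For all integers m ≥ 1, j ≥ 2, and 0 ≤ p ≤ m, the number of m(j−1)-element subsets of {1,…,m(2j−3)+p} in which no two elements differ by exactly m equals j^p; that is, C_m(m(2j−3)+p, m(j−1)) = j^p. Equivalently, the n-tile tiling triangle entry ⟨m(j−1)+p, m(j−1)⟩_m equals j^p. -/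
/-!
Split `{1, …, N}`, `N = m(2j-3) + p`, into its `m` residue classes modulo `m`: `p` of them have
`2j-2` elements and the others `2j-3`. A set avoids the difference `m` exactly when its trace on
each class, read as a path, contains no two consecutive points, and a path with `L` points has
`(L+1-k).choose k` such `k`-subsets. Hence every trace has at most `j-1` elements, so a set of
size `m(j-1)` must meet every class in a maximal trace: `j` choices on a long class and a single
one on a short class.
-/

open Finset

/-- `Cm m N k` is the number of `k`-element subsets of `{1, …, N}` in which
no two elements differ by exactly `m`. -/
def Cm (m N k : ℕ) : ℕ :=
  (((Finset.Icc 1 N).powersetCard k).filter (fun S => ∀ a ∈ S, a + m ∉ S)).card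

abbrev AvoidsDiff (m : ℕ) (S : Finset ℕ) : Prop := ∀ a ∈ S, a + m ∉ S

def avoidingSubsets (m : ℕ) (s : Finset ℕ) (k : ℕ) : Finset (Finset ℕ) :=
  (s.powersetCard k).filter (AvoidsDiff m)

lemma mem_avoidingSubsets {m k : ℕ} {s S : Finset ℕ} :
    S ∈ avoidingSubsets m s k ↔ (S ⊆ s ∧ #S = k) ∧ AvoidsDiff m S := by
  rw [avoidingSubsets, mem_filter, mem_powersetCard]

lemma avoidsDiff_map_add_right (m c : ℕ) (S : Finset ℕ) :
    AvoidsDiff m (S.map (addRightEmbedding c)) ↔ AvoidsDiff m S := by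
  simp [AvoidsDiff, add_right_comm]

lemma card_avoidingSubsets_map_add_right (m c k : ℕ) (s : Finset ℕ) :
    #(avoidingSubsets m (s.map (addRightEmbedding c)) k) = #(avoidingSubsets m s k) := by
  rw [avoidingSubsets, powersetCard_map, filter_map, card_map, avoidingSubsets]
  exact congrArg card (filter_congr fun S _ => avoidsDiff_map_add_right m c S)

lemma card_avoidingSubsets_Icc_one (m N k : ℕ) :
    #(avoidingSubsets m (Icc 1 N) k) = #(avoidingSubsets m (range N) k) := by
  have hIcc : Icc 1 N = (range N).map (addRightEmbedding 1) := by
    rw [range_eq_Ico, map_add_right_Ico, zero_add, Ico_add_one_right_eq_Icc]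
  rw [hIcc, card_avoidingSubsets_map_add_right]

lemma filter_notMem_avoidingSubsets_range (L k : ℕ) :
    (avoidingSubsets 1 (range (L + 1)) k).filter (L ∉ ·) = avoidingSubsets 1 (range L) k := by
  ext T
  simp only [mem_filter, mem_avoidingSubsets, subset_iff, mem_range]
  constructor
  · rintro ⟨⟨⟨hT, hc⟩, hd⟩, hL⟩
    exact ⟨⟨fun x hx => lt_of_le_of_ne (Nat.lt_succ_iff.mp (hT hx)) (by rintro rfl; exact hL hx), hc⟩, hd⟩
  · rintro ⟨⟨hT, hc⟩, hd⟩
    exact ⟨⟨⟨fun x hx => (hT hx).trans (Nat.lt_succ_self L), hc⟩, hd⟩, fun h => (hT h).false⟩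

lemma card_filter_mem_avoidingSubsets_range (L k : ℕ) :
    #((avoidingSubsets 1 (range (L + 2)) (k + 1)).filter (L + 1 ∈ ·)) =
      #(avoidingSubsets 1 (range L) k) := by
  refine card_nbij' (·.erase (L + 1)) (insert (L + 1)) ?_ ?_ ?_ ?_
  · intro T hT
    simp only [coe_filter, Set.mem_ofPred_eq, mem_avoidingSubsets, subset_iff, mem_range] at hT
    obtain ⟨⟨⟨hT, hc⟩, hd⟩, hL⟩ := hT
    simp only [mem_coe, mem_avoidingSubsets, subset_iff, mem_range, mem_erase]
    refine ⟨⟨fun x ⟨hx, hxT⟩ => ?_, by rw [card_erase_of_mem hL, hc]; rfl⟩,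
      fun a ha ha' => hd a (mem_of_mem_erase ha) (mem_of_mem_erase ha')⟩
    have := hT hxT
    have : x + 1 ≠ L + 1 := fun h => hd x hxT (h ▸ hL)
    omega
  · intro U hU
    simp only [mem_coe, mem_avoidingSubsets, subset_iff, mem_range] at hU
    obtain ⟨⟨hU, hc⟩, hd⟩ := hU
    have hL : L + 1 ∉ U := fun h => by have := hU h; omega
    simp only [coe_filter, Set.mem_ofPred_eq, mem_avoidingSubsets, subset_iff, mem_range,
      mem_insert, card_insert_of_notMem hL, hc, true_or, and_true]
    refine ⟨fun x hx => ?_, ?_⟩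
    · rcases hx with rfl | hx
      · omega
      · have := hU hx; omega
    · intro a ha h
      rw [mem_insert] at ha h
      rcases ha with rfl | ha <;> rcases h with h | h
      · omega
      · have := hU h; omega
      · have := hU ha; omega
      · exact hd a ha h
  · intro T hT
    simp only [coe_filter, Set.mem_ofPred_eq] at hT
    exact insert_erase hT.2
  · intro U hU
    simp only [mem_coe, mem_avoidingSubsets, subset_iff, mem_range] at hU
    exact erase_insert fun h => by have := hU.1.1 h; omega

lemma card_avoidingSubsets_range_add_two (L k : ℕ) :
    #(avoidingSubsets 1 (range (L + 2)) (k + 1)) =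
      #(avoidingSubsets 1 (range (L + 1)) (k + 1)) + #(avoidingSubsets 1 (range L) k) := by
  rw [← card_filter_add_card_filter_not (L + 1 ∈ ·), card_filter_mem_avoidingSubsets_range,
    filter_notMem_avoidingSubsets_range, add_comm]

theorem card_avoidingSubsets_one_range : ∀ L k : ℕ,
    #(avoidingSubsets 1 (range L) k) = (L + 1 - k).choose k
  | _, 0 => by simp [avoidingSubsets, filter_singleton, AvoidsDiff]
  | 1, 1 => by decide
  | 0, k + 1 => by simp [avoidingSubsets]
  | 1, k + 2 => by simp [avoidingSubsets]
  | L + 2, k + 1 => by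
    rw [card_avoidingSubsets_range_add_two, card_avoidingSubsets_one_range (L + 1),
      card_avoidingSubsets_one_range L]
    rcases le_or_gt k (L + 1) with hk | hk
    · rw [show L + 2 + 1 - (k + 1) = L + 1 - k + 1 by omega, Nat.choose_succ_succ,
        show L + 1 + 1 - (k + 1) = L + 1 - k by omega, add_comm]
    · simp [Nat.sub_eq_zero_of_le hk.le, Nat.sub_eq_zero_of_le (show L + 2 + 1 ≤ k + 1 by omega),
        Nat.sub_eq_zero_of_le (show L + 1 + 1 ≤ k + 1 by omega), Nat.choose_eq_zero_of_lt,
        show 0 < k by omega]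

lemma two_mul_card_le_of_avoidsDiff_one {L : ℕ} {T : Finset ℕ} (hT : T ⊆ range L)
    (hd : AvoidsDiff 1 T) : 2 * #T ≤ L + 1 := by
  have hne : (L + 1 - #T).choose #T ≠ 0 := by
    rw [← card_avoidingSubsets_one_range, ← pos_iff_ne_zero, card_pos]
    exact ⟨T, mem_avoidingSubsets.mpr ⟨⟨hT, rfl⟩, hd⟩⟩
  rw [Ne, Nat.choose_eq_zero_iff, not_lt] at hne
  omega

namespace ResidueClass

variable {m : ℕ}

def fiber (m : ℕ) (S : Finset ℕ) (r : ℕ) : Finset ℕ :=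
  (S.filter (· % m = r)).image (· / m)

def glue (m : ℕ) (T : Fin m → Finset ℕ) : Finset ℕ :=
  univ.biUnion fun r => (T r).image (fun i => r + i * m)

lemma mem_fiber {S : Finset ℕ} {r i : ℕ} (hr : r < m) : i ∈ fiber m S r ↔ r + i * m ∈ S := by
  simp only [fiber, mem_image, mem_filter]
  constructor
  · rintro ⟨x, ⟨hx, rfl⟩, rfl⟩
    rwa [Nat.mod_add_div' x m]
  · intro h
    refine ⟨r + i * m, ⟨h, ?_⟩, ?_⟩
    · rw [Nat.add_mul_mod_self_right, Nat.mod_eq_of_lt hr]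
    · rw [Nat.add_mul_div_right _ _ (by omega), Nat.div_eq_of_lt hr, zero_add]

lemma mem_glue (hm : 0 < m) {T : Fin m → Finset ℕ} {x : ℕ} :
    x ∈ glue m T ↔ x / m ∈ T ⟨x % m, Nat.mod_lt x hm⟩ := by
  simp only [glue, mem_biUnion, mem_univ, true_and, mem_image]
  constructor
  · rintro ⟨r, i, hi, rfl⟩
    have hmod : ((r : ℕ) + i * m) % m = r := by
      rw [Nat.add_mul_mod_self_right, Nat.mod_eq_of_lt r.2]
    have hdiv : ((r : ℕ) + i * m) / m = i := by
      rw [Nat.add_mul_div_right _ _ hm, Nat.div_eq_of_lt r.2, zero_add]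
    simpa only [hmod, hdiv] using hi
  · exact fun h => ⟨_, _, h, Nat.mod_add_div' x m⟩

lemma fiber_glue (hm : 0 < m) (T : Fin m → Finset ℕ) (r : Fin m) :
    fiber m (glue m T) r = T r := by
  ext i
  rw [mem_fiber r.2, mem_glue hm, Nat.add_mul_div_right _ _ hm, Nat.div_eq_of_lt r.2, zero_add]
  simp only [Nat.add_mul_mod_self_right, Nat.mod_eq_of_lt r.2]

lemma glue_fiber (hm : 0 < m) (S : Finset ℕ) : glue m (fun r => fiber m S r) = S := by
  ext x
  rw [mem_glue hm, mem_fiber (Nat.mod_lt x hm), Nat.mod_add_div']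

lemma card_eq_sum_card_fiber (hm : 0 < m) (S : Finset ℕ) :
    #S = ∑ r : Fin m, #(fiber m S r) := by
  rw [card_eq_sum_card_fiberwise (f := (· % m)) (t := range m)
    (fun x _ => mem_range.mpr (Nat.mod_lt x hm)), ← Fin.sum_univ_eq_sum_range]
  refine sum_congr rfl fun r _ => (card_image_of_injOn fun x hx y hy hxy => ?_).symm
  rw [← Nat.mod_add_div x m, ← Nat.mod_add_div y m, (mem_filter.mp hx).2, (mem_filter.mp hy).2]
  exact congrArg _ (congrArg _ hxy)

lemma subset_iff_forall_fiber_subset (hm : 0 < m) {S s : Finset ℕ} :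
    S ⊆ s ↔ ∀ r : Fin m, fiber m S r ⊆ fiber m s r := by
  refine ⟨fun h r i => by simpa only [mem_fiber r.2] using @h _, fun h x hx => ?_⟩
  rw [← Nat.mod_add_div' x m, ← mem_fiber (Nat.mod_lt x hm)] at hx ⊢
  exact h ⟨x % m, Nat.mod_lt x hm⟩ hx

lemma avoidsDiff_iff_forall_fiber (hm : 0 < m) {S : Finset ℕ} :
    AvoidsDiff m S ↔ ∀ r : Fin m, AvoidsDiff 1 (fiber m S r) := by
  constructor
  · intro h r i hi hi'
    rw [mem_fiber r.2] at hi hi'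
    exact h _ hi (by rwa [add_one_mul, ← add_assoc] at hi')
  · intro h x hx hx'
    rw [← Nat.mod_add_div' x m, ← mem_fiber (Nat.mod_lt x hm)] at hx
    rw [← Nat.mod_add_div' x m, add_assoc, ← add_one_mul, ← mem_fiber (Nat.mod_lt x hm)] at hx'
    exact h ⟨x % m, Nat.mod_lt x hm⟩ _ hx hx'

lemma fiber_range_mul_add {q p r : ℕ} (hp : p ≤ m) (hr : r < m) :
    fiber m (range (m * q + p)) r = range (if r < p then q + 1 else q) := by
  ext i
  rw [mem_fiber hr, mem_range, mem_range]
  rcases lt_trichotomy i q with hi | rfl | hi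
  · have : (i + 1) * m ≤ q * m := Nat.mul_le_mul_right m hi
    split_ifs <;> constructor <;> intro <;> nlinarith
  · split_ifs <;> constructor <;> intro <;> nlinarith
  · have : (q + 1) * m ≤ i * m := Nat.mul_le_mul_right m hi
    split_ifs <;> constructor <;> intro <;> nlinarith

end ResidueClass

open ResidueClass in
theorem card_avoidingSubsets_mul_eq_prod {m k : ℕ} (hm : 0 < m) (s : Finset ℕ)
    (hk : ∀ r : Fin m, ∀ T ⊆ fiber m s r, AvoidsDiff 1 T → #T ≤ k) :
    #(avoidingSubsets m s (m * k)) =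
      ∏ r : Fin m, #(avoidingSubsets 1 (fiber m s r) k) := by
  rw [← Fintype.card_piFinset]
  refine card_nbij' (fun S r => fiber m S r) (glue m) (fun S hS => ?_) (fun T hT => ?_)
    (fun S _ => glue_fiber hm S) (fun T _ => funext (fiber_glue hm T))
  · obtain ⟨⟨hSs, hcard⟩, hd⟩ := mem_avoidingSubsets.mp hS
    have hsub := (subset_iff_forall_fiber_subset hm).mp hSs
    have hdr := (avoidsDiff_iff_forall_fiber hm).mp hd
    have hsum : ∑ r : Fin m, #(fiber m S r) = ∑ _r : Fin m, k := by
      rw [← card_eq_sum_card_fiber hm, hcard, sum_const, card_univ, Fintype.card_fin, smul_eq_mul]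
    have hfull := (sum_eq_sum_iff_of_le fun r _ => hk r _ (hsub r) (hdr r)).mp hsum
    rw [mem_coe, Fintype.mem_piFinset]
    exact fun r => mem_avoidingSubsets.mpr ⟨⟨hsub r, hfull r (mem_univ r)⟩, hdr r⟩
  · rw [mem_coe, Fintype.mem_piFinset] at hT
    simp only [mem_avoidingSubsets, ← fiber_glue hm T] at hT
    refine mem_avoidingSubsets.mpr ⟨⟨?_, ?_⟩, ?_⟩
    · exact (subset_iff_forall_fiber_subset hm).mpr fun r => (hT r).1.1
    · rw [card_eq_sum_card_fiber hm, sum_congr rfl fun r _ => (hT r).1.2, sum_const, card_univ,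
        Fintype.card_fin, smul_eq_mul]
    · exact (avoidsDiff_iff_forall_fiber hm).mpr fun r => (hT r).2

/-- `C_m(m(2j-3) + p, m(j-1)) = j^p` for `j ≥ 2` and `0 ≤ p ≤ m`. -/
theorem stmt_13 (m j p : ℕ) (hm : 1 ≤ m) (hj : 2 ≤ j) (hp : p ≤ m) :
    Cm m (m * (2 * j - 3) + p) (m * (j - 1)) = j ^ p := by
  obtain ⟨n, rfl⟩ : ∃ n, j = n + 2 := ⟨j - 2, by omega⟩
  rw [show 2 * (n + 2) - 3 = 2 * n + 1 by omega, show n + 2 - 1 = n + 1 by omega]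
  have hfiber (r : Fin m) := ResidueClass.fiber_range_mul_add (q := 2 * n + 1) hp r.2
  calc Cm m (m * (2 * n + 1) + p) (m * (n + 1))
      = #(avoidingSubsets m (range (m * (2 * n + 1) + p)) (m * (n + 1))) :=
        card_avoidingSubsets_Icc_one _ _ _
    _ = ∏ r : Fin m, if (r : ℕ) < p then n + 2 else 1 := by
        rw [card_avoidingSubsets_mul_eq_prod (by omega)]
        · refine prod_congr rfl fun r _ => ?_
          rw [hfiber, card_avoidingSubsets_one_range]
          split_ifs
          · rw [show 2 * n + 1 + 1 + 1 - (n + 1) = n + 1 + 1 by omega, Nat.choose_succ_self_right]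
          · rw [show 2 * n + 1 + 1 - (n + 1) = n + 1 by omega, Nat.choose_self]
        · intro r T hT hd
          rw [hfiber] at hT
          have := two_mul_card_le_of_avoidsDiff_one hT hd
          split_ifs at this <;> omega
    _ = (n + 2) ^ p := by
        rw [prod_ite, prod_const, prod_const_one, mul_one, Fin.card_filter_val_lt, min_eq_right hp]
end
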